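/- arXiv:1511.08341 — 3 statements merged into one kernel-verified Lean document; each statement's English description precedes it below -/
import Mathlib

section
/- Let a : ℝ → ℝ be continuous on [0,1] and let (u,p) be a classical solution of the damped wave system on [0,T]. Then for all 0 ≤ s ≤ t ≤ T the energy identity E⁰(t) = E⁰(s) − ∫ₛᵗ ∫₀¹ a(x)·u(r,x)² dx dr holds. In particular, if a(x) ≥ 0 for all x ∈ [0,1], then E⁰ is monotonically decreasing on [0,T]. -/
/-!
Along a solution, `∂ₜ(u² + p²)/2 = u uₜ + p pₜ = -∂ₓ(u p) - a u²`. Integrating in `x`, the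
flux term vanishes because `p = 0` at both ends, so `dE⁰/dt = -∫₀¹ a u²`. Integrating in time,
after swapping the order of integration (everything is continuous on the compact rectangle,
`u` and `p` because their partial derivatives are bounded there), gives the energy identity.
-/

open MeasureTheory Set

/-- The L²(0,1) inner product `(f,g) = ∫₀¹ f g dx`. -/
noncomputable def L2ip (f g : ℝ → ℝ) : ℝ := ∫ x in (0:ℝ)..1, f x * g x

/-- The squared L²(0,1) norm `‖f‖² = ∫₀¹ f² dx`. -/
noncomputable def L2nsq (f : ℝ → ℝ) : ℝ := ∫ x in (0:ℝ)..1, (f x) ^ 2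

/-- The L²(0,1) norm. -/
noncomputable def L2nrm (f : ℝ → ℝ) : ℝ := Real.sqrt (L2nsq f)

/-- A classical solution of the damped wave system on `[0,T] × [0,1]`:
`u, p` (time first, space second) with partial derivatives `ut, ux, pt, px`
which are continuous on `[0,T] × [0,1]`, satisfying
`∂ₜ u + ∂ₓ p + a u = 0`, `∂ₜ p + ∂ₓ u = 0` and `p(t,0) = p(t,1) = 0`. -/
def IsClassicalSolution (T : ℝ) (a : ℝ → ℝ) (u p ut ux pt px : ℝ → ℝ → ℝ) : Prop :=
  (∀ t ∈ Icc (0:ℝ) T, ∀ x ∈ Icc (0:ℝ) 1,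
      HasDerivAt (fun s => u s x) (ut t x) t ∧
      HasDerivAt (fun y => u t y) (ux t x) x ∧
      HasDerivAt (fun s => p s x) (pt t x) t ∧
      HasDerivAt (fun y => p t y) (px t x) x) ∧
  ContinuousOn (Function.uncurry ut) (Icc (0:ℝ) T ×ˢ Icc (0:ℝ) 1) ∧
  ContinuousOn (Function.uncurry ux) (Icc (0:ℝ) T ×ˢ Icc (0:ℝ) 1) ∧
  ContinuousOn (Function.uncurry pt) (Icc (0:ℝ) T ×ˢ Icc (0:ℝ) 1) ∧
  ContinuousOn (Function.uncurry px) (Icc (0:ℝ) T ×ˢ Icc (0:ℝ) 1) ∧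
  (∀ t ∈ Icc (0:ℝ) T, ∀ x ∈ Icc (0:ℝ) 1,
      ut t x + px t x + a x * u t x = 0 ∧ pt t x + ux t x = 0) ∧
  (∀ t ∈ Icc (0:ℝ) T, p t 0 = 0 ∧ p t 1 = 0)

open Function
open scoped Interval

section JointContinuity

variable {F : Type*} [NormedAddCommGroup F] [NormedSpace ℝ F] {s t : Set ℝ}
  {f ft fx : ℝ → ℝ → F}

theorem lipschitzOnWith_uncurry_of_norm_partialDeriv_le (hs : Convex ℝ s) (ht : Convex ℝ t)
    (hft : ∀ τ ∈ s, ∀ x ∈ t, HasDerivWithinAt (fun σ => f σ x) (ft τ x) s τ)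
    (hfx : ∀ τ ∈ s, ∀ x ∈ t, HasDerivWithinAt (f τ) (fx τ x) t x) {M₁ M₂ : NNReal}
    (hM₁ : ∀ τ ∈ s, ∀ x ∈ t, ‖ft τ x‖ ≤ M₁) (hM₂ : ∀ τ ∈ s, ∀ x ∈ t, ‖fx τ x‖ ≤ M₂) :
    LipschitzOnWith (M₁ + M₂) (uncurry f) (s ×ˢ t) := by
  refine LipschitzOnWith.of_dist_le_mul fun ⟨τ, x⟩ ⟨hτ, hx⟩ ⟨τ', x'⟩ ⟨hτ', hx'⟩ => ?_
  have h₁ : ‖f τ x - f τ' x‖ ≤ M₁ * ‖τ - τ'‖ :=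
    hs.norm_image_sub_le_of_norm_hasDerivWithin_le (fun σ hσ => hft σ hσ x hx)
      (fun σ hσ => hM₁ σ hσ x hx) hτ' hτ
  have h₂ : ‖f τ' x - f τ' x'‖ ≤ M₂ * ‖x - x'‖ :=
    ht.norm_image_sub_le_of_norm_hasDerivWithin_le (fun y hy => hfx τ' hτ' y hy)
      (fun y hy => hM₂ τ' hτ' y hy) hx' hx
  rw [← dist_eq_norm, ← dist_eq_norm] at h₁ h₂
  calc dist (f τ x) (f τ' x') ≤ dist (f τ x) (f τ' x) + dist (f τ' x) (f τ' x') :=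
        dist_triangle _ _ _
    _ ≤ M₁ * dist τ τ' + M₂ * dist x x' := add_le_add h₁ h₂
    _ ≤ M₁ * max (dist τ τ') (dist x x') + M₂ * max (dist τ τ') (dist x x') := by
        gcongr
        exacts [le_max_left _ _, le_max_right _ _]
    _ = _ := by rw [Prod.dist_eq, NNReal.coe_add, add_mul]

theorem continuousOn_uncurry_of_hasDerivWithinAt (hs : Convex ℝ s) (ht : Convex ℝ t)
    (hsc : IsCompact s) (htc : IsCompact t)
    (hft : ∀ τ ∈ s, ∀ x ∈ t, HasDerivWithinAt (fun σ => f σ x) (ft τ x) s τ)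
    (hfx : ∀ τ ∈ s, ∀ x ∈ t, HasDerivWithinAt (f τ) (fx τ x) t x)
    (hft_cont : ContinuousOn (uncurry ft) (s ×ˢ t))
    (hfx_cont : ContinuousOn (uncurry fx) (s ×ˢ t)) :
    ContinuousOn (uncurry f) (s ×ˢ t) := by
  obtain ⟨M₁, hM₁⟩ := (hsc.prod htc).exists_bound_of_continuousOn hft_cont
  obtain ⟨M₂, hM₂⟩ := (hsc.prod htc).exists_bound_of_continuousOn hfx_cont
  exact (lipschitzOnWith_uncurry_of_norm_partialDeriv_le hs ht hft hfx
    (M₁ := M₁.toNNReal) (M₂ := M₂.toNNReal)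
    (fun τ hτ x hx => (hM₁ (τ, x) ⟨hτ, hx⟩).trans (Real.le_coe_toNNReal _))
    (fun τ hτ x hx => (hM₂ (τ, x) ⟨hτ, hx⟩).trans (Real.le_coe_toNNReal _))).continuousOn

end JointContinuity

theorem intervalIntegral_integral_swap_of_continuousOn {E : Type*} [NormedAddCommGroup E]
    [NormedSpace ℝ E] {f : ℝ → ℝ → E} {a b c d : ℝ}
    (hf : ContinuousOn (uncurry f) ([[c, d]] ×ˢ [[a, b]])) :
    ∫ x in a..b, ∫ y in c..d, f y x = ∫ y in c..d, ∫ x in a..b, f y x := by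
  refine (intervalIntegral_intervalIntegral_swap ?_).symm
  exact (hf.integrableOn_compact (isCompact_uIcc.prod isCompact_uIcc)).mono_set
    (prod_mono uIoc_subset_uIcc uIoc_subset_uIcc)

namespace IsClassicalSolution

variable {T : ℝ} {a : ℝ → ℝ} {u p ut ux pt px : ℝ → ℝ → ℝ}
  (h : IsClassicalSolution T a u p ut ux pt px)
include h

theorem continuousOn_u : ContinuousOn (uncurry u) (Icc 0 T ×ˢ Icc 0 1) :=
  continuousOn_uncurry_of_hasDerivWithinAt (convex_Icc 0 T) (convex_Icc 0 1) isCompact_Icc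
    isCompact_Icc (fun τ hτ x hx => (h.1 τ hτ x hx).1.hasDerivWithinAt)
    (fun τ hτ x hx => (h.1 τ hτ x hx).2.1.hasDerivWithinAt) h.2.1 h.2.2.1

theorem continuousOn_p : ContinuousOn (uncurry p) (Icc 0 T ×ˢ Icc 0 1) :=
  continuousOn_uncurry_of_hasDerivWithinAt (convex_Icc 0 T) (convex_Icc 0 1) isCompact_Icc
    isCompact_Icc (fun τ hτ x hx => (h.1 τ hτ x hx).2.2.1.hasDerivWithinAt)
    (fun τ hτ x hx => (h.1 τ hτ x hx).2.2.2.hasDerivWithinAt) h.2.2.2.1 h.2.2.2.2.1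

theorem continuousOn_energyRate :
    ContinuousOn (uncurry fun r x => u r x * ut r x + p r x * pt r x) (Icc 0 T ×ˢ Icc 0 1) :=
  (h.continuousOn_u.mul h.2.1).add (h.continuousOn_p.mul h.2.2.2.1)

theorem integral_energyRate (ha : ContinuousOn a (Icc 0 1)) {r : ℝ} (hr : r ∈ Icc 0 T) :
    ∫ x in (0:ℝ)..1, (u r x * ut r x + p r x * pt r x) = -∫ x in (0:ℝ)..1, a x * u r x ^ 2 := by
  have hu := h.continuousOn_u.uncurry_left r hr
  have hp := h.continuousOn_p.uncurry_left r hr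
  obtain ⟨hderiv, -, hux, -, hpx, hpde, hbc⟩ := h
  have hflux_int : IntervalIntegrable (fun x => ux r x * p r x + u r x * px r x) volume 0 1 :=
    (((hux.uncurry_left r hr).mul hp).add
      (hu.mul (hpx.uncurry_left r hr))).intervalIntegrable_of_Icc zero_le_one
  have hflux : ∫ x in (0:ℝ)..1, (ux r x * p r x + u r x * px r x) = 0 := by
    rw [intervalIntegral.integral_eq_sub_of_hasDerivAt (f := fun y => u r y * p r y),
      (hbc r hr).1, (hbc r hr).2]
    · ring
    · intro x hx
      rw [uIcc_of_le zero_le_one] at hx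
      exact (hderiv r hr x hx).2.1.mul (hderiv r hr x hx).2.2.2
    · exact hflux_int
  have hrate : EqOn (fun x => u r x * ut r x + p r x * pt r x)
      (fun x => -(ux r x * p r x + u r x * px r x) - a x * u r x ^ 2) [[0, 1]] := by
    intro x hx
    rw [uIcc_of_le zero_le_one] at hx
    obtain ⟨hu_eq, hp_eq⟩ := hpde r hr x hx
    linear_combination u r x * hu_eq + p r x * hp_eq
  rw [intervalIntegral.integral_congr hrate,
    intervalIntegral.integral_sub (f := fun x => -(ux r x * p r x + u r x * px r x))
      (g := fun x => a x * u r x ^ 2) hflux_int.neg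
      ((ha.mul (hu.pow 2)).intervalIntegrable_of_Icc zero_le_one),
    intervalIntegral.integral_neg, hflux, neg_zero, zero_sub]

theorem sq_add_sq_sub_eq_integral_energyRate {x : ℝ} (hx : x ∈ Icc 0 1) {s t : ℝ} (hs : 0 ≤ s)
    (hst : s ≤ t) (htT : t ≤ T) :
    u t x ^ 2 + p t x ^ 2 - (u s x ^ 2 + p s x ^ 2)
      = ∫ r in s..t, 2 * (u r x * ut r x + p r x * pt r x) := by
  have hsub : Icc s t ⊆ Icc 0 T := Icc_subset_Icc hs htT
  refine (intervalIntegral.integral_eq_sub_of_hasDerivAt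
    (f := fun r => u r x ^ 2 + p r x ^ 2) ?_ ?_).symm
  · intro r hr
    rw [uIcc_of_le hst] at hr
    have hd := (h.1 r (hsub hr) x hx)
    exact ((hd.1.pow 2).add (hd.2.2.1.pow 2)).congr_deriv (by push_cast; ring)
  · exact (continuousOn_const.mul ((h.continuousOn_energyRate.uncurry_right x hx).mono hsub))
      |>.intervalIntegrable_of_Icc hst

theorem energy_identity (ha : ContinuousOn a (Icc 0 1)) {s t : ℝ} (hs : 0 ≤ s) (hst : s ≤ t)
    (htT : t ≤ T) :
    (1/2) * (∫ x in (0:ℝ)..1, (u t x ^ 2 + p t x ^ 2))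
      = (1/2) * (∫ x in (0:ℝ)..1, (u s x ^ 2 + p s x ^ 2))
        - ∫ r in s..t, ∫ x in (0:ℝ)..1, a x * u r x ^ 2 := by
  have hsub : Icc s t ⊆ Icc 0 T := Icc_subset_Icc hs htT
  have henergy_int : ∀ τ ∈ Icc 0 T,
      IntervalIntegrable (fun x => u τ x ^ 2 + p τ x ^ 2) volume 0 1 := fun τ hτ =>
    (((h.continuousOn_u.uncurry_left τ hτ).pow 2).add
      ((h.continuousOn_p.uncurry_left τ hτ).pow 2)).intervalIntegrable_of_Icc zero_le_one
  have hrate_cont : ContinuousOn (uncurry fun r x => u r x * ut r x + p r x * pt r x)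
      ([[s, t]] ×ˢ [[0, 1]]) := by
    rw [uIcc_of_le hst, uIcc_of_le zero_le_one]
    exact h.continuousOn_energyRate.mono (prod_mono hsub subset_rfl)
  have hdiff : (∫ x in (0:ℝ)..1, (u t x ^ 2 + p t x ^ 2))
        - ∫ x in (0:ℝ)..1, (u s x ^ 2 + p s x ^ 2)
      = -2 * ∫ r in s..t, ∫ x in (0:ℝ)..1, a x * u r x ^ 2 := by
    rw [← intervalIntegral.integral_sub (henergy_int t ⟨hs.trans hst, htT⟩)
      (henergy_int s ⟨hs, hst.trans htT⟩)]
    calc _ = ∫ x in (0:ℝ)..1, 2 * ∫ r in s..t, (u r x * ut r x + p r x * pt r x) := by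
          refine intervalIntegral.integral_congr fun x hx => ?_
          rw [uIcc_of_le zero_le_one] at hx
          rw [h.sq_add_sq_sub_eq_integral_energyRate hx hs hst htT,
            intervalIntegral.integral_const_mul]
      _ = 2 * ∫ r in s..t, ∫ x in (0:ℝ)..1, (u r x * ut r x + p r x * pt r x) := by
          rw [intervalIntegral.integral_const_mul,
            intervalIntegral_integral_swap_of_continuousOn hrate_cont]
      _ = _ := by
          rw [intervalIntegral.integral_congr fun r hr =>
              h.integral_energyRate ha (hsub (uIcc_of_le hst ▸ hr)),
            intervalIntegral.integral_neg]
          ring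
  linarith

theorem energy_antitoneOn (ha : ContinuousOn a (Icc 0 1))
    (ha_nonneg : ∀ x ∈ Icc 0 1, 0 ≤ a x) :
    AntitoneOn (fun t => (1/2) * ∫ x in (0:ℝ)..1, (u t x ^ 2 + p t x ^ 2)) (Icc 0 T) := by
  intro s hs t ht hst
  have hdissipation : 0 ≤ ∫ r in s..t, ∫ x in (0:ℝ)..1, a x * u r x ^ 2 :=
    intervalIntegral.integral_nonneg hst fun _ _ =>
      intervalIntegral.integral_nonneg zero_le_one fun x hx =>
        mul_nonneg (ha_nonneg x hx) (sq_nonneg _)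
  simp only [h.energy_identity ha hs.1 hst ht.2]
  linarith

end IsClassicalSolution

theorem stmt0_general (T : ℝ) (a : ℝ → ℝ) (ha : ContinuousOn a (Icc (0:ℝ) 1))
    (u p ut ux pt px : ℝ → ℝ → ℝ)
    (hsol : IsClassicalSolution T a u p ut ux pt px) :
    (∀ s t : ℝ, 0 ≤ s → s ≤ t → t ≤ T →
      (1/2) * (∫ x in (0:ℝ)..1, ((u t x) ^ 2 + (p t x) ^ 2))
        = (1/2) * (∫ x in (0:ℝ)..1, ((u s x) ^ 2 + (p s x) ^ 2))
          - ∫ r in s..t, ∫ x in (0:ℝ)..1, a x * (u r x) ^ 2) ∧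
    ((∀ x ∈ Icc (0:ℝ) 1, 0 ≤ a x) →
      AntitoneOn (fun t => (1/2) * ∫ x in (0:ℝ)..1, ((u t x) ^ 2 + (p t x) ^ 2))
        (Icc (0:ℝ) T)) :=
  ⟨fun _ _ hs hst htT => hsol.energy_identity ha hs hst htT, hsol.energy_antitoneOn ha⟩

/-- Energy identity and monotone decay of the energy `E⁰` for classical solutions
of the damped wave system. -/
theorem stmt0 (T : ℝ) (hT : 0 < T) (a : ℝ → ℝ) (ha : ContinuousOn a (Icc (0:ℝ) 1))
    (u p ut ux pt px : ℝ → ℝ → ℝ)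
    (hsol : IsClassicalSolution T a u p ut ux pt px) :
    (∀ s t : ℝ, 0 ≤ s → s ≤ t → t ≤ T →
      (1/2) * (∫ x in (0:ℝ)..1, ((u t x) ^ 2 + (p t x) ^ 2))
        = (1/2) * (∫ x in (0:ℝ)..1, ((u s x) ^ 2 + (p s x) ^ 2))
          - ∫ r in s..t, ∫ x in (0:ℝ)..1, a x * (u r x) ^ 2) ∧
    ((∀ x ∈ Icc (0:ℝ) 1, 0 ≤ a x) →
      AntitoneOn (fun t => (1/2) * ∫ x in (0:ℝ)..1, ((u t x) ^ 2 + (p t x) ^ 2))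
        (Icc (0:ℝ) T)) :=
  stmt0_general T a ha u p ut ux pt px hsol
end

section
/- Let a : ℝ → ℝ be continuous on [0,1] with 0 < a₀ ≤ a(x) ≤ a₁ for all x ∈ [0,1], and let (u,p) be a classical solution of the damped wave system on [0,T]. Then for all 0 ≤ s ≤ t ≤ T one has E⁰(t) ≤ 3·e^{−α(t−s)}·E⁰(s), where α = (4/3)·a₀³/(8a₀² + 4a₀²a₁ + 2a₀a₁ + a₁⁴). -/
open MeasureTheory Set

open Function Filter Topology

/-!
Along solutions the energy only dissipates through the damping, `d/dt E⁰ = -∫ a u²`, which does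
not see `p`. Let `W = ∫₀ˣ u - x ∫₀¹ u`, the primitive of `u` corrected to vanish at both ends.
Then `∂ₓ W = u - ∫₀¹ u` and, by the equations, `∂ₜ W = -p - B` with `B` the same correction of
`∫₀ˣ a u`; so the cross term `ε ∫ p W` has derivative `ε (∫ u² - (∫ u)² - ∫ p² - ∫ p B)`, which
supplies the missing `-∫ p²`, while `∫ p B` is absorbed by Young's inequality and
`∫ B² ≤ ½ a₁ ∫ a u²`. For `L = E⁰ + ε ∫ p W` this gives `L' ≤ -c ∫ (u² + p²)` when `ε` is small
against `a₀, a₁`. Since `∫ W² ≤ ½ ∫ u²` (Cauchy–Schwarz), `E⁰ ≤ 2 L` and `L ≤ (3/2) E⁰` for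
`ε ≤ 2/3`; hence `L' ≤ -(4c/3) L`, and Grönwall for `L` gives the decay of `E⁰` with constant
`2 · 3/2 = 3`. The stated rate is `4c/3` for `ε = 2a₀³/D` and `c = ε/2`, where `D` is the
denominator of `α`.
-/

lemma integral_sq_nonneg (f : ℝ → ℝ) {a b : ℝ} (hab : a ≤ b) : 0 ≤ ∫ x in a..b, f x ^ 2 :=
  intervalIntegral.integral_nonneg hab fun x _ => sq_nonneg (f x)

lemma sq_integral_mul_le {f g : ℝ → ℝ} {a b : ℝ} (hab : a ≤ b)
    (hf : ContinuousOn f (Icc a b)) (hg : ContinuousOn g (Icc a b)) :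
    (∫ x in a..b, f x * g x) ^ 2 ≤ (∫ x in a..b, f x ^ 2) * ∫ x in a..b, g x ^ 2 := by
  have hf2 := (hf.fun_pow 2).intervalIntegrable_of_Icc (μ := volume) hab
  have hg2 := (hg.fun_pow 2).intervalIntegrable_of_Icc (μ := volume) hab
  have hfg := (hf.fun_mul hg).intervalIntegrable_of_Icc (μ := volume) hab
  have hquad : ∀ r : ℝ, 0 ≤ (∫ x in a..b, g x ^ 2) * (r * r)
      + 2 * (∫ x in a..b, f x * g x) * r + ∫ x in a..b, f x ^ 2 := by
    intro r
    have hexpand : ∫ x in a..b, (r * g x + f x) ^ 2 = (∫ x in a..b, g x ^ 2) * (r * r)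
        + 2 * (∫ x in a..b, f x * g x) * r + ∫ x in a..b, f x ^ 2 := by
      simp_rw [show ∀ x, (r * g x + f x) ^ 2 = r * r * g x ^ 2 + 2 * r * (f x * g x) + f x ^ 2
        from fun x => by ring]
      rw [intervalIntegral.integral_add ((hg2.const_mul _).add (hfg.const_mul _)) hf2,
        intervalIntegral.integral_add (hg2.const_mul _) (hfg.const_mul _),
        intervalIntegral.integral_const_mul, intervalIntegral.integral_const_mul]
      ring
    exact hexpand ▸ integral_sq_nonneg _ hab
  have := discrim_le_zero hquad
  rw [discrim] at this
  nlinarith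

lemma abs_integral_mul_le {f g : ℝ → ℝ} {a b c₁ c₂ : ℝ} (hab : a ≤ b)
    (hf : ContinuousOn f (Icc a b)) (hg : ContinuousOn g (Icc a b)) (hc₁ : 0 ≤ c₁) (hc₂ : 0 ≤ c₂)
    (hc : 1 ≤ 4 * c₁ * c₂) :
    |∫ x in a..b, f x * g x| ≤ c₁ * (∫ x in a..b, f x ^ 2) + c₂ * ∫ x in a..b, g x ^ 2 := by
  have hF := integral_sq_nonneg f hab
  have hG := integral_sq_nonneg g hab
  refine abs_le_of_sq_le_sq ?_ (by positivity)
  nlinarith [sq_integral_mul_le hab hf hg,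
    sq_nonneg (c₁ * (∫ x in a..b, f x ^ 2) - c₂ * ∫ x in a..b, g x ^ 2),
    mul_nonneg (sub_nonneg.2 hc) (mul_nonneg hF hG)]

section ParametricIntegral

variable {F F' : ℝ → ℝ → ℝ} {s : Set ℝ} {a b : ℝ}

lemma continuousOn_intervalIntegral_of_continuousOn_uncurry (hs : IsCompact s)
    (hF : ContinuousOn (uncurry F) (s ×ˢ uIcc a b)) :
    ContinuousOn (fun τ => ∫ x in a..b, F τ x) s := by
  obtain ⟨C, hC⟩ := (hs.prod isCompact_uIcc).exists_bound_of_continuousOn hF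
  intro τ hτ
  refine intervalIntegral.continuousWithinAt_of_dominated_interval (bound := fun _ => C)
    ?_ ?_ intervalIntegrable_const ?_
  · filter_upwards [self_mem_nhdsWithin] with σ hσ
    exact ((hF.uncurry_left σ hσ).mono uIoc_subset_uIcc).aestronglyMeasurable measurableSet_uIoc
  · filter_upwards [self_mem_nhdsWithin] with σ hσ
    exact ae_of_all _ fun x hx => hC (σ, x) ⟨hσ, uIoc_subset_uIcc hx⟩
  · exact ae_of_all _ fun x hx => hF.uncurry_right x (uIoc_subset_uIcc hx) τ hτ

lemma hasDerivAt_intervalIntegral_of_continuousOn_uncurry {t₀ : ℝ} (hs : IsCompact s)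
    (ht₀ : s ∈ 𝓝 t₀) (hF : ∀ τ ∈ s, ContinuousOn (F τ) (uIcc a b))
    (hF' : ContinuousOn (uncurry F') (s ×ˢ uIcc a b))
    (hd : ∀ τ ∈ s, ∀ x ∈ uIcc a b, HasDerivAt (F · x) (F' τ x) τ) :
    HasDerivAt (fun τ => ∫ x in a..b, F τ x) (∫ x in a..b, F' t₀ x) t₀ := by
  obtain ⟨C, hC⟩ := (hs.prod isCompact_uIcc).exists_bound_of_continuousOn hF'
  have ht : t₀ ∈ s := mem_of_mem_nhds ht₀
  refine (intervalIntegral.hasDerivAt_integral_of_dominated_loc_of_deriv_le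
    (bound := fun _ => C) ht₀ ?_ (hF t₀ ht).intervalIntegrable ?_ ?_ intervalIntegrable_const ?_).2
  · filter_upwards [ht₀] with τ hτ
    exact ((hF τ hτ).mono uIoc_subset_uIcc).aestronglyMeasurable measurableSet_uIoc
  · exact ((hF'.uncurry_left t₀ ht).mono uIoc_subset_uIcc).aestronglyMeasurable measurableSet_uIoc
  · exact ae_of_all _ fun x hx τ hτ => hC (τ, x) ⟨hτ, uIoc_subset_uIcc hx⟩
  · exact ae_of_all _ fun x hx τ hτ => hd τ hτ x (uIoc_subset_uIcc hx)

end ParametricIntegral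

lemma continuousOn_uncurry_of_hasDerivAt_fst {F F' : ℝ → ℝ → ℝ} {s t : Set ℝ}
    (hs : Convex ℝ s) (hst : IsCompact (s ×ˢ t)) (hF : ∀ τ ∈ s, ContinuousOn (F τ) t)
    (hF' : ContinuousOn (uncurry F') (s ×ˢ t))
    (hd : ∀ τ ∈ s, ∀ x ∈ t, HasDerivAt (F · x) (F' τ x) τ) :
    ContinuousOn (uncurry F) (s ×ˢ t) := by
  obtain ⟨C, hC⟩ := hst.exists_bound_of_continuousOn hF'
  refine continuousOn_prod_of_continuousOn_lipschitzOnWith _ C.toNNReal hF fun x hx => ?_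
  refine hs.lipschitzOnWith_of_nnnorm_hasDerivWithin_le
    (fun τ hτ => (hd τ hτ x hx).hasDerivWithinAt) fun τ hτ => ?_
  rw [← NNReal.coe_le_coe, Real.coe_toNNReal', coe_nnnorm]
  exact (hC (τ, x) ⟨hτ, hx⟩).trans (le_max_left _ _)

lemma le_exp_mul_of_hasDerivAt_le {f f' : ℝ → ℝ} {α s t : ℝ} (hst : s ≤ t)
    (hf : ContinuousOn f (Icc s t)) (hd : ∀ τ ∈ Ioo s t, HasDerivAt f (f' τ) τ)
    (hle : ∀ τ ∈ Ioo s t, f' τ ≤ -α * f τ) :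
    f t ≤ Real.exp (-(α * (t - s))) * f s := by
  have hanti : AntitoneOn (fun τ => f τ * Real.exp (α * τ)) (Icc s t) := by
    refine antitoneOn_of_hasDerivWithinAt_nonpos (convex_Icc s t)
      (hf.mul (by fun_prop)) (f' := fun τ => (f' τ + α * f τ) * Real.exp (α * τ))
      (fun τ hτ => ?_) fun τ hτ => ?_
    · rw [interior_Icc] at hτ
      have h := (hd τ hτ).mul ((hasDerivAt_id' τ).const_mul α).exp
      exact (h.congr_deriv (by ring)).hasDerivWithinAt
    · rw [interior_Icc] at hτ
      exact mul_nonpos_of_nonpos_of_nonneg (by linarith [hle τ hτ]) (Real.exp_pos _).le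
  have h := hanti (left_mem_Icc.2 hst) (right_mem_Icc.2 hst) hst
  rw [show -(α * (t - s)) = α * s - α * t by ring, Real.exp_sub, div_mul_eq_mul_div,
    le_div_iff₀ (Real.exp_pos _)]
  linarith

noncomputable def meanFreePrimitive (f : ℝ → ℝ) (x : ℝ) : ℝ :=
  (∫ y in (0:ℝ)..x, f y) - x * ∫ y in (0:ℝ)..1, f y

namespace meanFreePrimitive

variable {f : ℝ → ℝ} {x : ℝ}

@[simp] lemma apply_zero (f : ℝ → ℝ) : meanFreePrimitive f 0 = 0 := by
  simp [meanFreePrimitive]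

@[simp] lemma apply_one (f : ℝ → ℝ) : meanFreePrimitive f 1 = 0 := by
  simp [meanFreePrimitive]

lemma eq_integral_sub_mean (hf : IntervalIntegrable f volume 0 x) :
    meanFreePrimitive f x = ∫ y in (0:ℝ)..x, (f y - ∫ z in (0:ℝ)..1, f z) := by
  simp [meanFreePrimitive, intervalIntegral.integral_sub hf intervalIntegrable_const]

lemma hasDerivAt (hf : ContinuousOn f (Icc 0 1)) (hx : x ∈ Ioo (0:ℝ) 1) :
    HasDerivAt (meanFreePrimitive f) (f x - ∫ y in (0:ℝ)..1, f y) x := by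
  have hprim : HasDerivAt (fun z => ∫ y in (0:ℝ)..z, f y) (f x) x :=
    intervalIntegral.integral_hasDerivAt_right
      ((hf.mono (Icc_subset_Icc_right hx.2.le)).intervalIntegrable_of_Icc hx.1.le)
      ((hf.mono Ioo_subset_Icc_self).stronglyMeasurableAtFilter isOpen_Ioo x hx)
      ((hf.mono Ioo_subset_Icc_self).continuousAt (isOpen_Ioo.mem_nhds hx))
  have h := hprim.fun_sub ((hasDerivAt_id' x).mul_const (∫ y in (0:ℝ)..1, f y))
  rwa [one_mul] at h

lemma continuousOn (hf : ContinuousOn f (Icc 0 1)) :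
    ContinuousOn (meanFreePrimitive f) (Icc 0 1) := by
  have hprim := intervalIntegral.continuousOn_primitive_interval (μ := volume) (a := 0) (b := 1)
    (by rw [uIcc_of_le zero_le_one]; exact hf.integrableOn_Icc)
  rw [uIcc_of_le zero_le_one] at hprim
  exact hprim.sub (continuousOn_id.mul continuousOn_const)

lemma sq_le (hf : ContinuousOn f (Icc 0 1)) (hx : x ∈ Icc (0:ℝ) 1) :
    meanFreePrimitive f x ^ 2 ≤ x * ∫ y in (0:ℝ)..1, f y ^ 2 := by
  set m := ∫ y in (0:ℝ)..1, f y
  have hfm : ContinuousOn (fun y => f y - m) (Icc 0 1) := hf.sub continuousOn_const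
  have hfm2 := (hfm.fun_pow 2).intervalIntegrable_of_Icc (μ := volume) zero_le_one
  have hvar : ∫ y in (0:ℝ)..1, (f y - m) ^ 2 = (∫ y in (0:ℝ)..1, f y ^ 2) - m ^ 2 := by
    have hf1 := hf.intervalIntegrable_of_Icc (μ := volume) zero_le_one
    simp_rw [sub_sq]
    rw [intervalIntegral.integral_add ((((hf.fun_pow 2).intervalIntegrable_of_Icc zero_le_one)).sub
        ((hf1.const_mul 2).mul_const m)) intervalIntegrable_const,
      intervalIntegral.integral_sub ((hf.fun_pow 2).intervalIntegrable_of_Icc zero_le_one)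
        ((hf1.const_mul 2).mul_const m),
      intervalIntegral.integral_mul_const, intervalIntegral.integral_const_mul]
    simp only [intervalIntegral.integral_const, sub_zero, smul_eq_mul]
    ring
  calc meanFreePrimitive f x ^ 2 = (∫ y in (0:ℝ)..x, 1 * (f y - m)) ^ 2 := by
        rw [eq_integral_sub_mean
          ((hf.mono (Icc_subset_Icc_right hx.2)).intervalIntegrable_of_Icc hx.1)]
        simp [m]
    _ ≤ (∫ y in (0:ℝ)..x, (1:ℝ) ^ 2) * ∫ y in (0:ℝ)..x, (f y - m) ^ 2 :=
        sq_integral_mul_le hx.1 continuousOn_const (hfm.mono (Icc_subset_Icc_right hx.2))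
    _ ≤ x * ∫ y in (0:ℝ)..1, (f y - m) ^ 2 := by
        simp only [one_pow, intervalIntegral.integral_const, sub_zero, smul_eq_mul, mul_one]
        exact mul_le_mul_of_nonneg_left (intervalIntegral.integral_mono_interval le_rfl hx.1 hx.2
          (ae_of_all _ fun y => sq_nonneg _) hfm2) hx.1
    _ ≤ x * ∫ y in (0:ℝ)..1, f y ^ 2 := by
        rw [hvar]
        exact mul_le_mul_of_nonneg_left (sub_le_self _ (sq_nonneg m)) hx.1

lemma integral_sq_le (hf : ContinuousOn f (Icc 0 1)) :
    ∫ x in (0:ℝ)..1, meanFreePrimitive f x ^ 2 ≤ 1 / 2 * ∫ x in (0:ℝ)..1, f x ^ 2 := by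
  calc ∫ x in (0:ℝ)..1, meanFreePrimitive f x ^ 2
      ≤ ∫ x in (0:ℝ)..1, x * ∫ y in (0:ℝ)..1, f y ^ 2 :=
        intervalIntegral.integral_mono_on zero_le_one
          (((continuousOn hf).fun_pow 2).intervalIntegrable_of_Icc zero_le_one)
          (intervalIntegral.intervalIntegrable_id.mul_const _)
          fun x hx => sq_le hf hx
    _ = 1 / 2 * ∫ x in (0:ℝ)..1, f x ^ 2 := by
        rw [intervalIntegral.integral_mul_const, integral_id]
        ring

lemma abs_integral_mul_le (hf : ContinuousOn f (Icc 0 1)) {g : ℝ → ℝ}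
    (hg : ContinuousOn g (Icc 0 1)) {c₁ c₂ : ℝ} (hc₁ : 0 ≤ c₁) (hc₂ : 0 ≤ c₂)
    (hc : 1 ≤ 4 * c₁ * c₂) :
    |∫ x in (0:ℝ)..1, g x * meanFreePrimitive f x|
      ≤ c₁ * (∫ x in (0:ℝ)..1, g x ^ 2) + c₂ / 2 * ∫ x in (0:ℝ)..1, f x ^ 2 := by
  calc |∫ x in (0:ℝ)..1, g x * meanFreePrimitive f x|
      ≤ c₁ * (∫ x in (0:ℝ)..1, g x ^ 2) + c₂ * ∫ x in (0:ℝ)..1, meanFreePrimitive f x ^ 2 :=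
        _root_.abs_integral_mul_le zero_le_one hg (continuousOn hf) hc₁ hc₂ hc
    _ ≤ c₁ * (∫ x in (0:ℝ)..1, g x ^ 2) + c₂ / 2 * ∫ x in (0:ℝ)..1, f x ^ 2 := by
        nlinarith [mul_le_mul_of_nonneg_left (integral_sq_le hf) hc₂]

lemma abs_sub_le {C : ℝ} (hf : IntervalIntegrable f volume 0 1)
    (hC : ∀ y ∈ Icc (0:ℝ) 1, |f y| ≤ C) {x y : ℝ} (hx : x ∈ Icc (0:ℝ) 1) (hy : y ∈ Icc (0:ℝ) 1) :
    |meanFreePrimitive f x - meanFreePrimitive f y| ≤ 2 * C * |x - y| := by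
  have hsub : ∀ {z}, z ∈ Icc (0:ℝ) 1 → uIcc 0 z ⊆ uIcc 0 1 := fun hz =>
    uIcc_subset_uIcc_left (by rwa [uIcc_of_le zero_le_one])
  have hdiff : meanFreePrimitive f x - meanFreePrimitive f y
      = (∫ z in y..x, f z) - (x - y) * ∫ z in (0:ℝ)..1, f z := by
    rw [meanFreePrimitive, meanFreePrimitive, ← intervalIntegral.integral_interval_sub_left
      (hf.mono_set (hsub hx)) (hf.mono_set (hsub hy))]
    ring
  have hbound : ∀ {u v : ℝ}, u ∈ Icc (0:ℝ) 1 → v ∈ Icc (0:ℝ) 1 → |∫ z in u..v, f z| ≤ C * |v - u| :=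
    fun hu hv => by
      simpa only [Real.norm_eq_abs] using intervalIntegral.norm_integral_le_of_norm_le_const
        fun z hz =>
          (Real.norm_eq_abs _).trans_le (hC z (uIcc_subset_Icc hu hv (uIoc_subset_uIcc hz)))
  have h01 := hbound (left_mem_Icc.2 zero_le_one) (right_mem_Icc.2 zero_le_one)
  rw [sub_zero, abs_one, mul_one] at h01
  rw [hdiff]
  calc |(∫ z in y..x, f z) - (x - y) * ∫ z in (0:ℝ)..1, f z|
      ≤ |∫ z in y..x, f z| + |x - y| * |∫ z in (0:ℝ)..1, f z| := by
        rw [← abs_mul]; exact abs_sub _ _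
    _ ≤ C * |x - y| + |x - y| * C := by
        gcongr
        exact hbound hy hx
    _ = 2 * C * |x - y| := by ring

lemma continuousOn_uncurry {F : ℝ → ℝ → ℝ} {s : Set ℝ} (hs : IsCompact s)
    (hF : ContinuousOn (uncurry F) (s ×ˢ Icc 0 1)) :
    ContinuousOn (uncurry fun τ => meanFreePrimitive (F τ)) (s ×ˢ Icc 0 1) := by
  obtain ⟨C, hC⟩ := (hs.prod isCompact_Icc).exists_bound_of_continuousOn hF
  have hslice : ∀ τ ∈ s, ContinuousOn (F τ) (Icc 0 1) := fun τ hτ => hF.uncurry_left τ hτ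
  refine continuousOn_prod_of_continuousOn_lipschitzOnWith' _ (2 * C).toNNReal
    (fun τ hτ => LipschitzOnWith.of_dist_le' fun x hx y hy => ?_) fun x hx => ?_
  · exact abs_sub_le ((hslice τ hτ).intervalIntegrable_of_Icc zero_le_one)
      (fun y hy => hC (τ, y) ⟨hτ, hy⟩) hx hy
  · have hsub : ∀ {z}, z ∈ Icc (0:ℝ) 1 → s ×ˢ uIcc 0 z ⊆ s ×ˢ Icc 0 1 := fun hz =>
      prod_mono le_rfl (uIcc_subset_Icc (left_mem_Icc.2 zero_le_one) hz)
    exact (continuousOn_intervalIntegral_of_continuousOn_uncurry hs (hF.mono (hsub hx))).sub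
      (continuousOn_const.mul (continuousOn_intervalIntegral_of_continuousOn_uncurry hs
        (hF.mono (hsub (right_mem_Icc.2 zero_le_one)))))

lemma hasDerivAt_apply {F F' : ℝ → ℝ → ℝ} {s : Set ℝ} {t₀ x : ℝ} (hs : IsCompact s)
    (ht₀ : s ∈ 𝓝 t₀) (hF : ∀ τ ∈ s, ContinuousOn (F τ) (Icc 0 1))
    (hF' : ContinuousOn (uncurry F') (s ×ˢ Icc 0 1))
    (hd : ∀ τ ∈ s, ∀ y ∈ Icc (0:ℝ) 1, HasDerivAt (F · y) (F' τ y) τ) (hx : x ∈ Icc (0:ℝ) 1) :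
    HasDerivAt (fun τ => meanFreePrimitive (F τ) x) (meanFreePrimitive (F' t₀) x) t₀ := by
  have hsub : ∀ {z}, z ∈ Icc (0:ℝ) 1 → uIcc 0 z ⊆ Icc 0 1 :=
    uIcc_subset_Icc (left_mem_Icc.2 zero_le_one)
  have hder : ∀ {z}, z ∈ Icc (0:ℝ) 1 →
      HasDerivAt (fun τ => ∫ y in (0:ℝ)..z, F τ y) (∫ y in (0:ℝ)..z, F' t₀ y) t₀ := fun hz =>
    hasDerivAt_intervalIntegral_of_continuousOn_uncurry hs ht₀
      (fun τ hτ => (hF τ hτ).mono (hsub hz)) (hF'.mono (prod_mono le_rfl (hsub hz)))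
      fun τ hτ y hy => hd τ hτ y (hsub hz hy)
  exact (hder hx).sub ((hder (right_mem_Icc.2 zero_le_one)).const_mul x)

end meanFreePrimitive

noncomputable def energy (f g : ℝ → ℝ) : ℝ := 1 / 2 * ∫ x in (0:ℝ)..1, (f x ^ 2 + g x ^ 2)

noncomputable def lyapunov (ε : ℝ) (f g : ℝ → ℝ) : ℝ :=
  energy f g + ε * ∫ x in (0:ℝ)..1, g x * meanFreePrimitive f x

section Estimates

variable {f g : ℝ → ℝ}

lemma energy_eq_half_add (hf : ContinuousOn f (Icc 0 1)) (hg : ContinuousOn g (Icc 0 1)) :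
    energy f g = 1 / 2 * ((∫ x in (0:ℝ)..1, f x ^ 2) + ∫ x in (0:ℝ)..1, g x ^ 2) := by
  rw [energy, intervalIntegral.integral_add
    ((hf.fun_pow 2).intervalIntegrable_of_Icc zero_le_one)
    ((hg.fun_pow 2).intervalIntegrable_of_Icc zero_le_one)]

lemma abs_integral_mul_meanFreePrimitive_le (hf : ContinuousOn f (Icc 0 1))
    (hg : ContinuousOn g (Icc 0 1)) :
    |∫ x in (0:ℝ)..1, g x * meanFreePrimitive f x|
      ≤ 3 / 8 * (∫ x in (0:ℝ)..1, g x ^ 2) + 1 / 3 * ∫ x in (0:ℝ)..1, f x ^ 2 := by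
  have h := meanFreePrimitive.abs_integral_mul_le hf hg (c₁ := 3 / 8) (c₂ := 2 / 3)
    (by norm_num) (by norm_num) (by norm_num)
  norm_num at h ⊢
  exact h

lemma energy_le_two_mul_lyapunov (hf : ContinuousOn f (Icc 0 1))
    (hg : ContinuousOn g (Icc 0 1)) {ε : ℝ} (hε₀ : 0 ≤ ε) (hε : ε ≤ 2 / 3) :
    energy f g ≤ 2 * lyapunov ε f g := by
  have h := (abs_le.1 (abs_integral_mul_meanFreePrimitive_le hf hg)).1
  rw [lyapunov, energy_eq_half_add hf hg]
  nlinarith [mul_le_mul_of_nonneg_left h hε₀, integral_sq_nonneg f zero_le_one,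
    integral_sq_nonneg g zero_le_one,
    mul_nonneg (sub_nonneg.2 hε) (integral_sq_nonneg f zero_le_one),
    mul_nonneg (sub_nonneg.2 hε) (integral_sq_nonneg g zero_le_one)]

lemma lyapunov_le_three_halves_mul_energy (hf : ContinuousOn f (Icc 0 1))
    (hg : ContinuousOn g (Icc 0 1)) {ε : ℝ} (hε₀ : 0 ≤ ε) (hε : ε ≤ 2 / 3) :
    lyapunov ε f g ≤ 3 / 2 * energy f g := by
  have h := (abs_le.1 (abs_integral_mul_meanFreePrimitive_le hf hg)).2
  rw [lyapunov, energy_eq_half_add hf hg]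
  nlinarith [mul_le_mul_of_nonneg_left h hε₀, integral_sq_nonneg f zero_le_one,
    integral_sq_nonneg g zero_le_one,
    mul_nonneg (sub_nonneg.2 hε) (integral_sq_nonneg f zero_le_one),
    mul_nonneg (sub_nonneg.2 hε) (integral_sq_nonneg g zero_le_one)]

lemma dissipation_le {a : ℝ → ℝ} {a₀ a₁ ε c : ℝ} (hf : ContinuousOn f (Icc 0 1))
    (hg : ContinuousOn g (Icc 0 1)) (ha : ContinuousOn a (Icc 0 1)) (ha₀ : 0 ≤ a₀)
    (hbd : ∀ x ∈ Icc (0:ℝ) 1, a₀ ≤ a x ∧ a x ≤ a₁) (hε : 0 ≤ ε) (hεa₁ : ε * a₁ ≤ 4)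
    (hc : c ≤ ε / 2) (hc' : c ≤ a₀ - ε - ε * a₀ * a₁ / 4) :
    -(∫ x in (0:ℝ)..1, a x * f x ^ 2) + ε * ((∫ x in (0:ℝ)..1, f x ^ 2)
      - (∫ x in (0:ℝ)..1, f x) * (∫ x in (0:ℝ)..1, f x) - (∫ x in (0:ℝ)..1, g x ^ 2)
      - ∫ x in (0:ℝ)..1, g x * meanFreePrimitive (fun y => a y * f y) x)
    ≤ -(2 * c) * energy f g := by
  have haf : ContinuousOn (fun y => a y * f y) (Icc 0 1) := ha.mul hf
  have hQ : a₀ * (∫ x in (0:ℝ)..1, f x ^ 2) ≤ ∫ x in (0:ℝ)..1, a x * f x ^ 2 := by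
    rw [← intervalIntegral.integral_const_mul]
    exact intervalIntegral.integral_mono_on zero_le_one
      ((continuousOn_const.mul (hf.pow 2)).intervalIntegrable_of_Icc zero_le_one)
      ((ha.mul (hf.pow 2)).intervalIntegrable_of_Icc zero_le_one)
      fun x hx => mul_le_mul_of_nonneg_right (hbd x hx).1 (sq_nonneg _)
  have haQ : ∫ x in (0:ℝ)..1, (a x * f x) ^ 2 ≤ a₁ * ∫ x in (0:ℝ)..1, a x * f x ^ 2 := by
    rw [← intervalIntegral.integral_const_mul]
    refine intervalIntegral.integral_mono_on zero_le_one
      ((haf.pow 2).intervalIntegrable_of_Icc zero_le_one)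
      ((continuousOn_const.mul (ha.mul (hf.pow 2))).intervalIntegrable_of_Icc zero_le_one)
      fun x hx => ?_
    rw [mul_pow, sq (a x), mul_assoc]
    exact mul_le_mul_of_nonneg_right (hbd x hx).2
      (mul_nonneg (ha₀.trans (hbd x hx).1) (sq_nonneg _))
  have hR := (abs_le.1 (meanFreePrimitive.abs_integral_mul_le haf hg (c₁ := 1 / 2) (c₂ := 1 / 2)
    (by norm_num) (by norm_num) (by norm_num))).1
  rw [energy_eq_half_add hf hg]
  nlinarith [mul_nonneg (by linarith : 0 ≤ 1 - ε * a₁ / 4) (sub_nonneg.2 hQ),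
    mul_nonneg hε (mul_self_nonneg (∫ x in (0:ℝ)..1, f x)),
    mul_nonneg (sub_nonneg.2 hc') (integral_sq_nonneg f zero_le_one),
    mul_nonneg (sub_nonneg.2 hc) (integral_sq_nonneg g zero_le_one),
    mul_le_mul_of_nonneg_left hR hε, mul_le_mul_of_nonneg_left haQ hε]

end Estimates

namespace IsClassicalSolution

variable {T : ℝ} {a : ℝ → ℝ} {u p ut ux pt px : ℝ → ℝ → ℝ}

lemma continuousOn_u_s1 (hsol : IsClassicalSolution T a u p ut ux pt px) :
    ContinuousOn (uncurry u) (Icc 0 T ×ˢ Icc 0 1) := by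
  obtain ⟨hd, hut, -⟩ := hsol
  exact continuousOn_uncurry_of_hasDerivAt_fst (convex_Icc 0 T) (isCompact_Icc.prod isCompact_Icc)
    (fun τ hτ x hx => (hd τ hτ x hx).2.1.continuousAt.continuousWithinAt) hut
    fun τ hτ x hx => (hd τ hτ x hx).1

lemma continuousOn_p_s1 (hsol : IsClassicalSolution T a u p ut ux pt px) :
    ContinuousOn (uncurry p) (Icc 0 T ×ˢ Icc 0 1) := by
  obtain ⟨hd, -, -, hpt, -⟩ := hsol
  exact continuousOn_uncurry_of_hasDerivAt_fst (convex_Icc 0 T) (isCompact_Icc.prod isCompact_Icc)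
    (fun τ hτ x hx => (hd τ hτ x hx).2.2.2.continuousAt.continuousWithinAt) hpt
    fun τ hτ x hx => (hd τ hτ x hx).2.2.1

lemma integral_mul_ut_add_mul_pt (hsol : IsClassicalSolution T a u p ut ux pt px)
    (ha : ContinuousOn a (Icc 0 1)) {τ : ℝ} (hτ : τ ∈ Icc 0 T) :
    ∫ x in (0:ℝ)..1, (u τ x * ut τ x + p τ x * pt τ x) = -∫ x in (0:ℝ)..1, a x * u τ x ^ 2 := by
  have hu := hsol.continuousOn_u_s1.uncurry_left τ hτ
  have hp := hsol.continuousOn_p_s1.uncurry_left τ hτ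
  obtain ⟨hd, -, hux', -, hpx', hpde, hbc⟩ := hsol
  have hux := hux'.uncurry_left τ hτ
  have hpx := hpx'.uncurry_left τ hτ
  have h01 : uIcc (0:ℝ) 1 = Icc 0 1 := uIcc_of_le zero_le_one
  have hflux : ∫ x in (0:ℝ)..1, (ux τ x * p τ x + u τ x * px τ x) = 0 := by
    rw [intervalIntegral.integral_deriv_mul_eq_sub (fun x hx => (hd τ hτ x (h01 ▸ hx)).2.1)
      (fun x hx => (hd τ hτ x (h01 ▸ hx)).2.2.2) (hux.intervalIntegrable_of_Icc zero_le_one)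
      (hpx.intervalIntegrable_of_Icc zero_le_one), (hbc τ hτ).1, (hbc τ hτ).2]
    ring
  calc ∫ x in (0:ℝ)..1, (u τ x * ut τ x + p τ x * pt τ x)
      = ∫ x in (0:ℝ)..1, (-(ux τ x * p τ x + u τ x * px τ x) - a x * u τ x ^ 2) :=
        intervalIntegral.integral_congr fun x hx => by
          have hpde := hpde τ hτ x (h01 ▸ hx)
          linear_combination u τ x * hpde.1 + p τ x * hpde.2
    _ = -∫ x in (0:ℝ)..1, a x * u τ x ^ 2 := by
        rw [intervalIntegral.integral_sub (f := fun x => -(ux τ x * p τ x + u τ x * px τ x))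
          (((hux.mul hp).add (hu.mul hpx)).intervalIntegrable_of_Icc zero_le_one).neg
          ((ha.fun_mul (hu.fun_pow 2)).intervalIntegrable_of_Icc zero_le_one),
          intervalIntegral.integral_neg, hflux, neg_zero, zero_sub]

lemma integral_ut (hsol : IsClassicalSolution T a u p ut ux pt px)
    (ha : ContinuousOn a (Icc 0 1)) {τ x : ℝ} (hτ : τ ∈ Icc 0 T) (hx : x ∈ Icc (0:ℝ) 1) :
    ∫ y in (0:ℝ)..x, ut τ y = -p τ x - ∫ y in (0:ℝ)..x, a y * u τ y := by
  have hu := hsol.continuousOn_u_s1.uncurry_left τ hτ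
  obtain ⟨hd, -, -, -, hpx', hpde, hbc⟩ := hsol
  have hsub : uIcc 0 x ⊆ Icc 0 1 := uIcc_subset_Icc (left_mem_Icc.2 zero_le_one) hx
  have hpx := (hpx'.uncurry_left τ hτ).mono hsub
  have hftc : ∫ y in (0:ℝ)..x, px τ y = p τ x := by
    rw [intervalIntegral.integral_eq_sub_of_hasDerivAt (fun y hy => (hd τ hτ y (hsub hy)).2.2.2)
      hpx.intervalIntegrable, (hbc τ hτ).1, sub_zero]
  rw [intervalIntegral.integral_congr (g := fun y => -px τ y - a y * u τ y)
      fun y hy => by linear_combination (hpde τ hτ y (hsub hy)).1,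
    intervalIntegral.integral_sub (f := fun y => -px τ y) hpx.intervalIntegrable.neg
      ((ha.fun_mul hu).mono hsub).intervalIntegrable,
    intervalIntegral.integral_neg, hftc]

lemma meanFreePrimitive_ut (hsol : IsClassicalSolution T a u p ut ux pt px)
    (ha : ContinuousOn a (Icc 0 1)) {τ x : ℝ} (hτ : τ ∈ Icc 0 T) (hx : x ∈ Icc (0:ℝ) 1) :
    meanFreePrimitive (ut τ) x = -p τ x - meanFreePrimitive (fun y => a y * u τ y) x := by
  rw [meanFreePrimitive, meanFreePrimitive, hsol.integral_ut ha hτ hx,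
    hsol.integral_ut ha hτ (right_mem_Icc.2 zero_le_one)]
  obtain ⟨-, -, -, -, -, -, hbc⟩ := hsol
  rw [(hbc τ hτ).2]
  ring

lemma integral_pt_mul_meanFreePrimitive (hsol : IsClassicalSolution T a u p ut ux pt px)
    {τ : ℝ} (hτ : τ ∈ Icc 0 T) :
    ∫ x in (0:ℝ)..1, pt τ x * meanFreePrimitive (u τ) x
      = (∫ x in (0:ℝ)..1, u τ x ^ 2) - (∫ x in (0:ℝ)..1, u τ x) * ∫ x in (0:ℝ)..1, u τ x := by
  have hu := hsol.continuousOn_u_s1.uncurry_left τ hτ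
  obtain ⟨hd, -, hux', -, -, hpde, -⟩ := hsol
  have hux := hux'.uncurry_left τ hτ
  have h01 : uIcc (0:ℝ) 1 = Icc 0 1 := uIcc_of_le zero_le_one
  have hW := meanFreePrimitive.continuousOn hu
  set m := ∫ x in (0:ℝ)..1, u τ x
  have hparts :
      ∫ x in (0:ℝ)..1, (ux τ x * meanFreePrimitive (u τ) x + u τ x * (u τ x - m)) = 0 := by
    rw [intervalIntegral.integral_deriv_mul_eq_sub_of_hasDerivAt (h01 ▸ hu) (h01 ▸ hW)
      (fun x hx => (hd τ hτ x (Ioo_subset_Icc_self (by simpa using hx))).2.1)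
      (fun x hx => meanFreePrimitive.hasDerivAt hu (by simpa using hx))
      (hux.intervalIntegrable_of_Icc zero_le_one)
      ((hu.sub continuousOn_const).intervalIntegrable_of_Icc zero_le_one)]
    simp
  rw [intervalIntegral.integral_add ((hux.fun_mul hW).intervalIntegrable_of_Icc zero_le_one)
    ((hu.fun_mul (hu.fun_sub continuousOn_const)).intervalIntegrable_of_Icc zero_le_one)] at hparts
  calc ∫ x in (0:ℝ)..1, pt τ x * meanFreePrimitive (u τ) x
      = -∫ x in (0:ℝ)..1, ux τ x * meanFreePrimitive (u τ) x := by
        rw [← intervalIntegral.integral_neg]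
        exact intervalIntegral.integral_congr fun x hx => by
          linear_combination meanFreePrimitive (u τ) x * (hpde τ hτ x (h01 ▸ hx)).2
    _ = ∫ x in (0:ℝ)..1, u τ x * (u τ x - m) := by linarith
    _ = (∫ x in (0:ℝ)..1, u τ x ^ 2) - m * m := by
        simp_rw [mul_sub, ← sq]
        rw [intervalIntegral.integral_sub ((hu.fun_pow 2).intervalIntegrable_of_Icc zero_le_one)
          ((hu.intervalIntegrable_of_Icc zero_le_one).mul_const m),
          intervalIntegral.integral_mul_const, sq m]

lemma integral_cross_term_deriv (hsol : IsClassicalSolution T a u p ut ux pt px)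
    (ha : ContinuousOn a (Icc 0 1)) {τ : ℝ} (hτ : τ ∈ Icc 0 T) :
    ∫ x in (0:ℝ)..1, (pt τ x * meanFreePrimitive (u τ) x + p τ x * meanFreePrimitive (ut τ) x)
      = (∫ x in (0:ℝ)..1, u τ x ^ 2) - (∫ x in (0:ℝ)..1, u τ x) * (∫ x in (0:ℝ)..1, u τ x)
        - (∫ x in (0:ℝ)..1, p τ x ^ 2)
        - ∫ x in (0:ℝ)..1, p τ x * meanFreePrimitive (fun y => a y * u τ y) x := by
  have hu := hsol.continuousOn_u_s1.uncurry_left τ hτ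
  have hp := hsol.continuousOn_p_s1.uncurry_left τ hτ
  have ⟨_, hut', _, hpt', _⟩ := hsol
  have hpt := hpt'.uncurry_left τ hτ
  have hut := hut'.uncurry_left τ hτ
  have h01 : uIcc (0:ℝ) 1 = Icc 0 1 := uIcc_of_le zero_le_one
  have hB := meanFreePrimitive.continuousOn (ha.fun_mul hu)
  rw [intervalIntegral.integral_add
      ((hpt.fun_mul (meanFreePrimitive.continuousOn hu)).intervalIntegrable_of_Icc zero_le_one)
      ((hp.fun_mul (meanFreePrimitive.continuousOn hut)).intervalIntegrable_of_Icc zero_le_one),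
    hsol.integral_pt_mul_meanFreePrimitive hτ,
    intervalIntegral.integral_congr (f := fun x => p τ x * meanFreePrimitive (ut τ) x)
      (g := fun x => -p τ x ^ 2 - p τ x * meanFreePrimitive (fun y => a y * u τ y) x)
      fun x hx => by simp only [hsol.meanFreePrimitive_ut ha hτ (h01 ▸ hx)]; ring,
    intervalIntegral.integral_sub (f := fun x => -p τ x ^ 2)
      ((hp.fun_pow 2).intervalIntegrable_of_Icc zero_le_one).neg
      ((hp.fun_mul hB).intervalIntegrable_of_Icc zero_le_one), intervalIntegral.integral_neg]
  ring

lemma continuousOn_lyapunov (hsol : IsClassicalSolution T a u p ut ux pt px) (ε : ℝ) :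
    ContinuousOn (fun τ => lyapunov ε (u τ) (p τ)) (Icc 0 T) := by
  have hu := hsol.continuousOn_u_s1
  have hp := hsol.continuousOn_p_s1
  have hW := meanFreePrimitive.continuousOn_uncurry isCompact_Icc hu
  rw [← uIcc_of_le zero_le_one] at hu hp hW
  exact (continuousOn_const.mul (continuousOn_intervalIntegral_of_continuousOn_uncurry
    (F := fun τ x => u τ x ^ 2 + p τ x ^ 2) isCompact_Icc
      ((hu.fun_pow 2).fun_add (hp.fun_pow 2)))).add
    (continuousOn_const.mul (continuousOn_intervalIntegral_of_continuousOn_uncurry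
      (F := fun τ x => p τ x * meanFreePrimitive (u τ) x) isCompact_Icc (hp.fun_mul hW)))

lemma hasDerivAt_energy (hsol : IsClassicalSolution T a u p ut ux pt px) {τ : ℝ}
    (hτ : τ ∈ Ioo 0 T) :
    HasDerivAt (fun σ => energy (u σ) (p σ))
      (∫ x in (0:ℝ)..1, (u τ x * ut τ x + p τ x * pt τ x)) τ := by
  have hu := hsol.continuousOn_u_s1
  have hp := hsol.continuousOn_p_s1
  obtain ⟨hd, hut, -, hpt, -⟩ := hsol
  rw [← uIcc_of_le zero_le_one] at hu hp hut hpt hd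
  have h := hasDerivAt_intervalIntegral_of_continuousOn_uncurry
    (F := fun σ x => u σ x ^ 2 + p σ x ^ 2)
    (F' := fun σ x => 2 * (u σ x * ut σ x + p σ x * pt σ x)) isCompact_Icc
    (Icc_mem_nhds hτ.1 hτ.2) (fun σ hσ => ((hu.uncurry_left σ hσ).pow 2).add
      ((hp.uncurry_left σ hσ).pow 2))
    (continuousOn_const.fun_mul ((hu.fun_mul hut).fun_add (hp.fun_mul hpt))) fun σ hσ x hx =>
      (((hd σ hσ x hx).1.pow 2).add ((hd σ hσ x hx).2.2.1.pow 2)).congr_deriv (by ring)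
  refine (h.const_mul (1 / 2)).congr_deriv ?_
  rw [intervalIntegral.integral_const_mul]
  ring

lemma hasDerivAt_integral_mul_meanFreePrimitive
    (hsol : IsClassicalSolution T a u p ut ux pt px) {τ : ℝ} (hτ : τ ∈ Ioo 0 T) :
    HasDerivAt (fun σ => ∫ x in (0:ℝ)..1, p σ x * meanFreePrimitive (u σ) x)
      (∫ x in (0:ℝ)..1, (pt τ x * meanFreePrimitive (u τ) x
        + p τ x * meanFreePrimitive (ut τ) x)) τ := by
  obtain ⟨K, hK, hτK, hKT⟩ := exists_compact_subset isOpen_Ioo hτ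
  have hKI : K ×ˢ Icc (0:ℝ) 1 ⊆ Icc 0 T ×ˢ Icc 0 1 :=
    prod_mono (hKT.trans Ioo_subset_Icc_self) le_rfl
  have hu := hsol.continuousOn_u_s1
  have hp := hsol.continuousOn_p_s1
  have hW := meanFreePrimitive.continuousOn_uncurry isCompact_Icc hu
  obtain ⟨hd, hut, -, hpt, -⟩ := hsol
  have hWt := meanFreePrimitive.continuousOn_uncurry isCompact_Icc hut
  have hWd : ∀ σ ∈ K, ∀ x ∈ Icc (0:ℝ) 1, HasDerivAt (fun σ => meanFreePrimitive (u σ) x)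
      (meanFreePrimitive (ut σ) x) σ := fun σ hσ x hx =>
    meanFreePrimitive.hasDerivAt_apply isCompact_Icc (Icc_mem_nhds (hKT hσ).1 (hKT hσ).2)
      (fun σ hσ => hu.uncurry_left σ hσ) hut (fun σ hσ y hy => (hd σ hσ y hy).1) hx
  exact hasDerivAt_intervalIntegral_of_continuousOn_uncurry
    (F := fun σ x => p σ x * meanFreePrimitive (u σ) x)
    (F' := fun σ x => pt σ x * meanFreePrimitive (u σ) x + p σ x * meanFreePrimitive (ut σ) x)
    (a := 0) (b := 1) hK (mem_interior_iff_mem_nhds.1 hτK)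
    (fun σ hσ => by
      rw [uIcc_of_le zero_le_one]
      exact ((hp.mono hKI).uncurry_left σ hσ).mul ((hW.mono hKI).uncurry_left σ hσ))
    (by rw [uIcc_of_le zero_le_one]; exact (((hpt.fun_mul hW).fun_add (hp.fun_mul hWt)).mono hKI))
    fun σ hσ x hx => by
      rw [uIcc_of_le zero_le_one] at hx
      exact (hd σ (hKT.trans Ioo_subset_Icc_self hσ) x hx).2.2.1.mul (hWd σ hσ x hx)

lemma hasDerivAt_lyapunov (hsol : IsClassicalSolution T a u p ut ux pt px)
    (ha : ContinuousOn a (Icc 0 1)) (ε : ℝ) {τ : ℝ} (hτ : τ ∈ Ioo 0 T) :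
    HasDerivAt (fun σ => lyapunov ε (u σ) (p σ))
      (-(∫ x in (0:ℝ)..1, a x * u τ x ^ 2) + ε * ((∫ x in (0:ℝ)..1, u τ x ^ 2)
        - (∫ x in (0:ℝ)..1, u τ x) * (∫ x in (0:ℝ)..1, u τ x) - (∫ x in (0:ℝ)..1, p τ x ^ 2)
        - ∫ x in (0:ℝ)..1, p τ x * meanFreePrimitive (fun y => a y * u τ y) x)) τ := by
  have h := (hsol.hasDerivAt_energy hτ).add
    ((hsol.hasDerivAt_integral_mul_meanFreePrimitive hτ).const_mul ε)
  rwa [hsol.integral_mul_ut_add_mul_pt ha (Ioo_subset_Icc_self hτ),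
    hsol.integral_cross_term_deriv ha (Ioo_subset_Icc_self hτ)] at h

lemma lyapunov_le_exp (hsol : IsClassicalSolution T a u p ut ux pt px)
    (ha : ContinuousOn a (Icc 0 1)) {a₀ a₁ ε c : ℝ} (ha₀ : 0 ≤ a₀)
    (hbd : ∀ x ∈ Icc (0:ℝ) 1, a₀ ≤ a x ∧ a x ≤ a₁) (hε₀ : 0 ≤ ε) (hε : ε ≤ 2 / 3)
    (hεa₁ : ε * a₁ ≤ 4) (hc₀ : 0 ≤ c) (hc : c ≤ ε / 2) (hc' : c ≤ a₀ - ε - ε * a₀ * a₁ / 4)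
    {s t : ℝ} (hs : 0 ≤ s) (hst : s ≤ t) (htT : t ≤ T) :
    lyapunov ε (u t) (p t) ≤ Real.exp (-(4 / 3 * c * (t - s))) * lyapunov ε (u s) (p s) := by
  refine le_exp_mul_of_hasDerivAt_le hst ((hsol.continuousOn_lyapunov ε).mono
    (Icc_subset_Icc hs htT)) (fun τ hτ => hsol.hasDerivAt_lyapunov ha ε
      ⟨hs.trans_lt hτ.1, hτ.2.trans_le htT⟩) fun τ hτ => ?_
  have hτ' : τ ∈ Icc 0 T := ⟨hs.trans hτ.1.le, hτ.2.le.trans htT⟩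
  have hu := hsol.continuousOn_u_s1.uncurry_left τ hτ'
  have hp := hsol.continuousOn_p_s1.uncurry_left τ hτ'
  have hL := lyapunov_le_three_halves_mul_energy hu hp hε₀ hε
  calc _ ≤ -(2 * c) * energy (u τ) (p τ) := dissipation_le hu hp ha ha₀ hbd hε₀ hεa₁ hc hc'
    _ ≤ -(4 / 3 * c) * lyapunov ε (u τ) (p τ) := by nlinarith

end IsClassicalSolution

lemma decay_constants {a₀ a₁ D : ℝ} (ha₀ : 0 < a₀) (ha₀₁ : a₀ ≤ a₁)
    (hD : D = 8 * a₀ ^ 2 + 4 * a₀ ^ 2 * a₁ + 2 * a₀ * a₁ + a₁ ^ 4) :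
    2 * a₀ ^ 3 / D ≤ 2 / 3 ∧ 2 * a₀ ^ 3 / D * a₁ ≤ 4 ∧
      a₀ ^ 3 / D ≤ a₀ - 2 * a₀ ^ 3 / D - 2 * a₀ ^ 3 / D * a₀ * a₁ / 4 := by
  have ha₁ : 0 < a₁ := ha₀.trans_le ha₀₁
  have hD₀ : 0 < D := by rw [hD]; positivity
  have h3 : a₀ ^ 3 ≤ a₁ ^ 3 := pow_le_pow_left₀ ha₀.le ha₀₁ 3
  refine ⟨?_, ?_, ?_⟩
  · rw [div_le_iff₀ hD₀, hD]
    nlinarith [mul_le_mul_of_nonneg_left ha₀₁ (sq_nonneg a₀), pow_pos ha₀ 2, pow_pos ha₁ 4,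
      mul_pos ha₀ ha₁]
  · rw [div_mul_eq_mul_div, div_le_iff₀ hD₀, hD]
    nlinarith [mul_le_mul_of_nonneg_right h3 ha₁.le, pow_pos ha₀ 2, mul_pos (pow_pos ha₀ 2) ha₁,
      mul_pos ha₀ ha₁]
  · have key : 3 * a₀ ^ 2 + a₀ ^ 3 * a₁ / 2 ≤ D := by
      rw [hD]
      nlinarith [mul_le_mul_of_nonneg_right h3 ha₁.le, pow_pos ha₀ 2, mul_pos (pow_pos ha₀ 2) ha₁,
        mul_pos ha₀ ha₁]
    rw [show a₀ - 2 * a₀ ^ 3 / D - 2 * a₀ ^ 3 / D * a₀ * a₁ / 4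
      = a₀ * (D - 2 * a₀ ^ 2 - a₀ ^ 3 * a₁ / 2) / D by field_simp; ring]
    gcongr
    nlinarith

theorem stmt1_general (T : ℝ) (a : ℝ → ℝ) (a₀ a₁ : ℝ)
    (ha : ContinuousOn a (Icc (0:ℝ) 1)) (ha₀ : 0 < a₀)
    (hbd : ∀ x ∈ Icc (0:ℝ) 1, a₀ ≤ a x ∧ a x ≤ a₁)
    (u p ut ux pt px : ℝ → ℝ → ℝ)
    (hsol : IsClassicalSolution T a u p ut ux pt px) :
    ∀ s t : ℝ, 0 ≤ s → s ≤ t → t ≤ T →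
      (1/2) * (∫ x in (0:ℝ)..1, ((u t x) ^ 2 + (p t x) ^ 2))
        ≤ 3 * Real.exp (-((4/3) * a₀ ^ 3 / (8 * a₀ ^ 2 + 4 * a₀ ^ 2 * a₁ + 2 * a₀ * a₁ + a₁ ^ 4)
              * (t - s)))
          * ((1/2) * ∫ x in (0:ℝ)..1, ((u s x) ^ 2 + (p s x) ^ 2)) := by
  intro s t hs hst htT
  have ha₀₁ : a₀ ≤ a₁ := (hbd 0 (left_mem_Icc.2 zero_le_one)).1.trans
    (hbd 0 (left_mem_Icc.2 zero_le_one)).2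
  have ha₁ : 0 < a₁ := ha₀.trans_le ha₀₁
  set D := 8 * a₀ ^ 2 + 4 * a₀ ^ 2 * a₁ + 2 * a₀ * a₁ + a₁ ^ 4 with hD
  have ht : t ∈ Icc 0 T := ⟨hs.trans hst, htT⟩
  have hs' : s ∈ Icc 0 T := ⟨hs, hst.trans htT⟩
  obtain ⟨hε, hεa₁, hc'⟩ := decay_constants ha₀ ha₀₁ hD
  have hdecay := hsol.lyapunov_le_exp ha ha₀.le hbd (by positivity) hε (by linarith)
    (by positivity) (le_of_eq (by ring)) hc' hs hst htT
  have hlow := energy_le_two_mul_lyapunov (hsol.continuousOn_u_s1.uncurry_left t ht)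
    (hsol.continuousOn_p_s1.uncurry_left t ht) (by positivity) hε
  have hup := lyapunov_le_three_halves_mul_energy (hsol.continuousOn_u_s1.uncurry_left s hs')
    (hsol.continuousOn_p_s1.uncurry_left s hs') (by positivity) hε
  rw [show 4 / 3 * a₀ ^ 3 / D = 4 / 3 * (a₀ ^ 3 / D) by ring]
  calc energy (u t) (p t) ≤ 2 * lyapunov (2 * a₀ ^ 3 / D) (u t) (p t) := hlow
    _ ≤ 2 * (Real.exp (-(4 / 3 * (a₀ ^ 3 / D) * (t - s)))
          * lyapunov (2 * a₀ ^ 3 / D) (u s) (p s)) := by gcongr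
    _ ≤ 2 * (Real.exp (-(4 / 3 * (a₀ ^ 3 / D) * (t - s))) * (3 / 2 * energy (u s) (p s))) := by
        gcongr
    _ = _ := by rw [energy]; ring

/-- Exponential decay of the energy `E⁰` for classical solutions of the damped
wave system with uniformly positive bounded damping. -/
theorem stmt1 (T : ℝ) (hT : 0 < T) (a : ℝ → ℝ) (a₀ a₁ : ℝ)
    (ha : ContinuousOn a (Icc (0:ℝ) 1)) (ha₀ : 0 < a₀)
    (hbd : ∀ x ∈ Icc (0:ℝ) 1, a₀ ≤ a x ∧ a x ≤ a₁)
    (u p ut ux pt px : ℝ → ℝ → ℝ)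
    (hsol : IsClassicalSolution T a u p ut ux pt px) :
    ∀ s t : ℝ, 0 ≤ s → s ≤ t → t ≤ T →
      (1/2) * (∫ x in (0:ℝ)..1, ((u t x) ^ 2 + (p t x) ^ 2))
        ≤ 3 * Real.exp (-((4/3) * a₀ ^ 3 / (8 * a₀ ^ 2 + 4 * a₀ ^ 2 * a₁ + 2 * a₀ * a₁ + a₁ ^ 4)
              * (t - s)))
          * ((1/2) * ∫ x in (0:ℝ)..1, ((u s x) ^ 2 + (p s x) ^ 2)) :=
  stmt1_general T a a₀ a₁ ha ha₀ hbd u p ut ux pt px hsol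
end

section
/- Let a : ℝ → ℝ be square-integrable on (0,1) with positive mean ā := ∫₀¹ a(x) dx > 0, and let u : ℝ → ℝ be continuously differentiable on [0,1]. Then ‖u‖ ≤ (1/π)·(1 + (1/ā)·‖a − ā‖)·‖u′‖ + (1/ā)·|∫₀¹ a(x)·u(x) dx|, where ‖f‖ = (∫₀¹ f(x)² dx)^{1/2} denotes the L²(0,1) norm and a − ā is the function x ↦ a(x) − ā. -/
/-!
Write `u = w + ū` with `ū = ∫₀¹ u`. Since `w` has mean zero, Wirtinger's inequality
`‖w‖ ≤ ‖u′‖ / π` holds: the even reflection of `w` to `[-1, 1]` is a continuous `2`-periodic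
function of mean zero, so by Parseval it suffices to compare its Fourier coefficients with those of
its derivative, which differ by the factor `π n` with `|n| ≥ 1`. The mean is controlled by testing
against `a`: `ā ū = ∫₀¹ a u - ∫₀¹ (a - ā) w`, and the last integral is at most `‖a - ā‖ ‖w‖` by
Cauchy–Schwarz. Finally `‖u‖ ≤ ‖w‖ + |ū|`.
-/

open MeasureTheory Set

theorem abs_integral_mul_le_sqrt_mul_sqrt {α : Type*} [MeasurableSpace α] {μ : Measure α}
    {f g : α → ℝ} (hf : MemLp f 2 μ) (hg : MemLp g 2 μ) :
    |∫ x, f x * g x ∂μ| ≤ √(∫ x, f x ^ 2 ∂μ) * √(∫ x, g x ^ 2 ∂μ) := by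
  have htwo : ENNReal.ofReal 2 = 2 := by norm_num
  have holder := integral_mul_le_Lp_mul_Lq_of_nonneg Real.HolderConjugate.two_two
    (ae_of_all μ fun x => abs_nonneg (f x)) (ae_of_all μ fun x => abs_nonneg (g x))
    (htwo ▸ hf.abs) (htwo ▸ hg.abs)
  simp only [Real.rpow_two, sq_abs, ← Real.sqrt_eq_rpow] at holder
  calc |∫ x, f x * g x ∂μ| ≤ ∫ x, |f x * g x| ∂μ := abs_integral_le_integral_abs
    _ ≤ _ := by simpa only [abs_mul] using holder

open Complex in
theorem norm_fourierCoeffOn_le_of_hasDeriv_right {a b : ℝ} (hab : a < b) {f f' : ℝ → ℂ}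
    {n : ℤ} (hn : n ≠ 0) (hf : ContinuousOn f (Icc a b))
    (hff' : ∀ x ∈ Ioo a b, HasDerivWithinAt f (f' x) (Ioi x) x)
    (hf' : IntervalIntegrable f' volume a b) (hper : f a = f b) :
    ‖fourierCoeffOn hab f n‖ ≤ (b - a) / (2 * Real.pi) * ‖fourierCoeffOn hab f' n‖ := by
  have hn1 : (1 : ℝ) ≤ |(n : ℝ)| := by exact_mod_cast Int.one_le_abs hn
  rw [fourierCoeffOn_of_hasDeriv_right hab hn (by rwa [uIcc_of_le hab.le])
      (by rwa [min_eq_left hab.le, max_eq_right hab.le]) hf', hper, sub_self, mul_zero, zero_sub,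
    norm_mul, norm_neg, norm_mul, ← ofReal_sub, norm_real,
    Real.norm_of_nonneg (sub_nonneg.2 hab.le)]
  have hden : ‖(-2 * (Real.pi : ℂ) * I * n)‖ = 2 * Real.pi * |(n : ℝ)| := by
    simp [norm_intCast, abs_of_pos Real.pi_pos]
  rw [norm_div, norm_one, hden]
  calc 1 / (2 * Real.pi * |(n : ℝ)|) * ((b - a) * ‖fourierCoeffOn hab f' n‖)
      = (b - a) / (2 * Real.pi) * ‖fourierCoeffOn hab f' n‖ / |(n : ℝ)| := by
        field_simp
    _ ≤ _ := div_le_self (by have := Real.pi_pos; have := sub_pos.2 hab; positivity) hn1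

theorem ContinuousOn.memLp_restrict_Ioc {E : Type*} [NormedAddCommGroup E] {f : ℝ → E}
    {a b : ℝ} (hf : ContinuousOn f (Icc a b)) (p : ENNReal) :
    MemLp f p (volume.restrict (Ioc a b)) := by
  obtain ⟨C, hC⟩ := isCompact_Icc.exists_bound_of_continuousOn hf
  exact .of_bound ((hf.mono Ioc_subset_Icc_self).aestronglyMeasurable measurableSet_Ioc) C
    ((ae_restrict_iff' measurableSet_Ioc).2 (ae_of_all _ fun x hx => hC x (Ioc_subset_Icc_self hx)))

theorem fourierCoeffOn_zero {a b : ℝ} (hab : a < b) (f : ℝ → ℂ) :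
    fourierCoeffOn hab f 0 = (b - a)⁻¹ • ∫ x in a..b, f x := by
  simp [fourierCoeffOn_eq_integral]

theorem integral_norm_sq_le_of_hasDeriv_right {a b : ℝ} (hab : a < b) {f f' : ℝ → ℂ}
    (hf : ContinuousOn f (Icc a b)) (hff' : ∀ x ∈ Ioo a b, HasDerivWithinAt f (f' x) (Ioi x) x)
    (hf' : MemLp f' 2 (volume.restrict (Ioc a b))) (hper : f a = f b)
    (hmean : ∫ x in a..b, f x = 0) :
    ∫ x in a..b, ‖f x‖ ^ 2 ≤ ((b - a) / (2 * Real.pi)) ^ 2 * ∫ x in a..b, ‖f' x‖ ^ 2 := by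
  have hf'int : IntervalIntegrable f' volume a b :=
    (intervalIntegrable_iff_integrableOn_Ioc_of_le hab.le).2 (hf'.integrable one_le_two)
  have hcoeff : ∀ n, ‖fourierCoeffOn hab f n‖ ^ 2
      ≤ ((b - a) / (2 * Real.pi)) ^ 2 * ‖fourierCoeffOn hab f' n‖ ^ 2 := by
    intro n
    rcases eq_or_ne n 0 with rfl | hn
    · rw [fourierCoeffOn_zero, hmean, smul_zero, norm_zero, zero_pow two_ne_zero]
      positivity
    · rw [← mul_pow]
      exact pow_le_pow_left₀ (norm_nonneg _)
        (norm_fourierCoeffOn_le_of_hasDeriv_right hab hn hf hff' hf'int hper) 2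
  have hparseval := hasSum_le hcoeff (hasSum_sq_fourierCoeffOn hab (hf.memLp_restrict_Ioc 2))
    ((hasSum_sq_fourierCoeffOn hab hf').mul_left _)
  rw [smul_eq_mul, smul_eq_mul, mul_left_comm] at hparseval
  exact le_of_mul_le_mul_left hparseval (inv_pos.2 (sub_pos.2 hab))

theorem intervalIntegral.integral_comp_abs {f : ℝ → ℝ} {L : ℝ} (hL : 0 ≤ L)
    (hf : IntervalIntegrable f volume 0 L) :
    ∫ x in -L..L, f |x| = 2 * ∫ x in 0..L, f x := by
  have hpos : EqOn (fun x => f |x|) f (uIcc 0 L) := fun x hx => by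
    rw [uIcc_of_le hL] at hx
    simp only [abs_of_nonneg hx.1]
  have hneg : EqOn (fun x => f |x|) (fun x => f (-x)) (uIcc (-L) 0) := fun x hx => by
    rw [uIcc_of_le (neg_nonpos.2 hL)] at hx
    simp only [abs_of_nonpos hx.2]
  have hf_neg : IntervalIntegrable (fun x => f (-x)) volume (-L) 0 := by
    simpa using ((IntervalIntegrable.iff_comp_neg (f := f)).1 hf).symm
  rw [← intervalIntegral.integral_add_adjacent_intervals
      (hf_neg.congr (hneg.symm.mono uIoc_subset_uIcc))
      (hf.congr (hpos.symm.mono uIoc_subset_uIcc)),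
    intervalIntegral.integral_congr hneg, intervalIntegral.integral_congr hpos,
    intervalIntegral.integral_comp_neg]
  simp only [neg_zero, neg_neg]
  ring

theorem hasDerivWithinAt_comp_abs {v v' : ℝ → ℝ} {x : ℝ} (hv : HasDerivAt v (v' |x|) |x|) :
    HasDerivWithinAt (fun y => v |y|) ((if x < 0 then -1 else 1) * v' |x|) (Ioi x) x := by
  by_cases hx : x < 0
  · rw [abs_of_neg hx] at hv
    have hcomp : HasDerivAt (fun y => v (-y)) (-1 * v' |x|) x := by
      simpa [abs_of_neg hx, Function.comp_def] using hv.scomp x (hasDerivAt_neg x)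
    rw [if_pos hx]
    refine (hcomp.congr_of_eventuallyEq ?_).hasDerivWithinAt
    filter_upwards [Iio_mem_nhds hx] with y hy
    rw [abs_of_neg hy]
  · rw [if_neg hx, one_mul]
    rw [not_lt] at hx
    rw [abs_of_nonneg hx] at hv ⊢
    exact hv.hasDerivWithinAt.congr (fun y hy => by rw [abs_of_nonneg (hx.trans hy.out.le)])
      (by rw [abs_of_nonneg hx])

theorem integral_sq_le_of_integral_eq_zero {L : ℝ} (hL : 0 < L) {v v' : ℝ → ℝ}
    (hv : ∀ x ∈ Icc 0 L, HasDerivAt v (v' x) x) (hv' : ContinuousOn v' (Icc 0 L))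
    (hmean : ∫ x in 0..L, v x = 0) :
    ∫ x in 0..L, v x ^ 2 ≤ (L / Real.pi) ^ 2 * ∫ x in 0..L, v' x ^ 2 := by
  have hvc : ContinuousOn v (Icc 0 L) := fun x hx => (hv x hx).continuousAt.continuousWithinAt
  have habs : MapsTo (fun x : ℝ => |x|) (Icc (-L) L) (Icc 0 L) := fun x hx =>
    ⟨abs_nonneg x, abs_le.2 hx⟩
  set V : ℝ → ℂ := fun x => (v |x| : ℂ)
  -- the right derivative of `V`: at `0` it is `v' 0`, hence no `SignType.sign` here
  set G : ℝ → ℂ := fun x => ((if x < 0 then -1 else 1) * v' |x| : ℝ)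
  have hV : ContinuousOn V (Icc (-L) L) :=
    Complex.continuous_ofReal.comp_continuousOn (hvc.comp continuous_abs.continuousOn habs)
  have hVG : ∀ x ∈ Ioo (-L) L, HasDerivWithinAt V (G x) (Ioi x) x := fun x hx =>
    (hasDerivWithinAt_comp_abs (hv |x| (habs (Ioo_subset_Icc_self hx)))).ofReal_comp
  have hG : MemLp G 2 (volume.restrict (Ioc (-L) L)) := by
    have hv'abs : ContinuousOn (fun x => (v' |x| : ℂ)) (Icc (-L) L) :=
      Complex.continuous_ofReal.comp_continuousOn (hv'.comp continuous_abs.continuousOn habs)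
    refine (hv'abs.memLp_restrict_Ioc 2).of_le ?_ (ae_of_all _ fun x => ?_)
    · have hsign : Measurable fun x : ℝ => if x < 0 then (-1 : ℝ) else 1 :=
        Measurable.ite measurableSet_Iio measurable_const measurable_const
      exact Complex.continuous_ofReal.comp_aestronglyMeasurable (hsign.aestronglyMeasurable.mul
        (((hv'.comp continuous_abs.continuousOn habs).mono Ioc_subset_Icc_self).aestronglyMeasurable
          measurableSet_Ioc))
    · simp only [G]; split_ifs <;> simp
  have hVmean : ∫ x in -L..L, V x = 0 := by
    rw [intervalIntegral.integral_ofReal, intervalIntegral.integral_comp_abs hL.le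
      (hvc.intervalIntegrable_of_Icc hL.le), hmean]
    simp
  have key := integral_norm_sq_le_of_hasDeriv_right (by linarith) hV hVG hG (by simp [V]) hVmean
  have hVsq : ∀ x, ‖V x‖ ^ 2 = v |x| ^ 2 := fun x => by simp [V]
  have hGsq : ∀ x, ‖G x‖ ^ 2 = v' |x| ^ 2 := fun x => by simp only [G]; split_ifs <;> simp
  simp only [hVsq, hGsq] at key
  rw [intervalIntegral.integral_comp_abs (f := fun x => v x ^ 2) hL.le
      ((hvc.pow 2).intervalIntegrable_of_Icc hL.le),
    intervalIntegral.integral_comp_abs (f := fun x => v' x ^ 2) hL.le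
      ((hv'.pow 2).intervalIntegrable_of_Icc hL.le),
    show (L - -L) / (2 * Real.pi) = L / Real.pi by field_simp; ring] at key
  linarith

theorem L2nrm_le_of_integral_eq_zero {v v' : ℝ → ℝ}
    (hv : ∀ x ∈ Icc (0 : ℝ) 1, HasDerivAt v (v' x) x) (hv' : ContinuousOn v' (Icc 0 1))
    (hmean : ∫ x in (0 : ℝ)..1, v x = 0) :
    L2nrm v ≤ 1 / Real.pi * L2nrm v' := by
  have h := Real.sqrt_le_sqrt (integral_sq_le_of_integral_eq_zero one_pos hv hv' hmean)
  rwa [Real.sqrt_mul (sq_nonneg _), Real.sqrt_sq (by positivity)] at h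

theorem L2nsq_add_const {w : ℝ → ℝ} (hw : IntervalIntegrable w volume 0 1)
    (hw2 : IntervalIntegrable (fun x => w x ^ 2) volume 0 1) (hmean : ∫ x in (0 : ℝ)..1, w x = 0)
    (c : ℝ) : L2nsq (fun x => w x + c) = L2nsq w + c ^ 2 := by
  have hexpand : ∀ x, (w x + c) ^ 2 = (w x ^ 2 + 2 * c * w x) + c ^ 2 := fun x => by ring
  simp only [L2nsq, hexpand]
  rw [intervalIntegral.integral_add (hw2.add (hw.const_mul _)) intervalIntegrable_const,
    intervalIntegral.integral_add hw2 (hw.const_mul _), intervalIntegral.integral_const_mul,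
    hmean]
  simp

theorem L2nrm_add_const_le {w : ℝ → ℝ} (hw : IntervalIntegrable w volume 0 1)
    (hw2 : IntervalIntegrable (fun x => w x ^ 2) volume 0 1) (hmean : ∫ x in (0 : ℝ)..1, w x = 0)
    (c : ℝ) : L2nrm (fun x => w x + c) ≤ L2nrm w + |c| := by
  have hnonneg : 0 ≤ L2nsq w :=
    intervalIntegral.integral_nonneg zero_le_one fun x _ => sq_nonneg (w x)
  rw [L2nrm, L2nsq_add_const hw hw2 hmean, L2nrm, Real.sqrt_le_iff]
  refine ⟨by positivity, ?_⟩
  nlinarith [Real.sq_sqrt hnonneg, Real.sqrt_nonneg (L2nsq w), abs_nonneg c, sq_abs c]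

theorem abs_integral_mul_le_L2nrm_mul_L2nrm {f g : ℝ → ℝ}
    (hf : MemLp f 2 (volume.restrict (Ioc 0 1))) (hg : MemLp g 2 (volume.restrict (Ioc 0 1))) :
    |∫ x in (0 : ℝ)..1, f x * g x| ≤ L2nrm f * L2nrm g := by
  simpa only [L2nrm, L2nsq, intervalIntegral.integral_of_le zero_le_one]
    using abs_integral_mul_le_sqrt_mul_sqrt hf hg

theorem integral_sub_integral_eq_zero {u : ℝ → ℝ} (hu : IntervalIntegrable u volume 0 1) :
    ∫ x in (0 : ℝ)..1, (u x - ∫ y in (0 : ℝ)..1, u y) = 0 := by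
  simp [intervalIntegral.integral_sub hu intervalIntegrable_const]

theorem integral_sub_mean_mul_sub_mean {a u : ℝ → ℝ} (ha : IntervalIntegrable a volume 0 1)
    (hu : IntervalIntegrable u volume 0 1)
    (hau : IntervalIntegrable (fun x => a x * u x) volume 0 1) :
    ∫ x in (0 : ℝ)..1, (a x - ∫ y in (0 : ℝ)..1, a y) * (u x - ∫ y in (0 : ℝ)..1, u y)
      = (∫ x in (0 : ℝ)..1, a x * u x) - (∫ x in (0 : ℝ)..1, a x) * ∫ x in (0 : ℝ)..1, u x := by
  set ā := ∫ y in (0 : ℝ)..1, a y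
  set ū := ∫ y in (0 : ℝ)..1, u y
  have hexpand : ∀ x, (a x - ā) * (u x - ū) = (a x * u x - ū * a x) - (ā * u x - ā * ū) :=
    fun x => by ring
  simp only [hexpand]
  rw [intervalIntegral.integral_sub (hau.sub (ha.const_mul _))
      ((hu.const_mul _).sub intervalIntegrable_const),
    intervalIntegral.integral_sub hau (ha.const_mul _),
    intervalIntegral.integral_sub (hu.const_mul _) intervalIntegrable_const,
    intervalIntegral.integral_const_mul, intervalIntegral.integral_const_mul]
  simp only [intervalIntegral.integral_const, sub_zero, smul_eq_mul, one_mul]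
  ring

theorem abs_integral_mul_abs_integral_le {a u : ℝ → ℝ}
    (ha : MemLp a 2 (volume.restrict (Ioc 0 1))) (hu : ContinuousOn u (Icc 0 1)) :
    |∫ x in (0 : ℝ)..1, a x| * |∫ x in (0 : ℝ)..1, u x|
      ≤ |∫ x in (0 : ℝ)..1, a x * u x|
        + L2nrm (fun x => a x - ∫ y in (0 : ℝ)..1, a y)
          * L2nrm (fun x => u x - ∫ y in (0 : ℝ)..1, u y) := by
  have hu_L2 := hu.memLp_restrict_Ioc 2
  have hIoc {f : ℝ → ℝ} (hf : MemLp f 2 (volume.restrict (Ioc 0 1))) :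
      IntervalIntegrable f volume 0 1 :=
    (intervalIntegrable_iff_integrableOn_Ioc_of_le zero_le_one).2 (hf.integrable one_le_two)
  have hcov := integral_sub_mean_mul_sub_mean (hIoc ha) (hIoc hu_L2)
    ((intervalIntegrable_iff_integrableOn_Ioc_of_le zero_le_one).2 (ha.integrable_mul hu_L2))
  rw [← abs_mul, ← sub_sub_cancel (∫ x in (0 : ℝ)..1, a x * u x) (_ * _), ← hcov]
  exact (abs_sub _ _).trans (add_le_add_right (abs_integral_mul_le_L2nrm_mul_L2nrm
    (ha.sub (memLp_const _)) (hu_L2.sub (memLp_const _))) _)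

/-- A generalized Poincaré inequality: for `a ∈ L²(0,1)` with positive mean `ā`
and `u ∈ C¹([0,1])`,
`‖u‖ ≤ (1/π)(1 + ‖a − ā‖/ā)‖u′‖ + |∫₀¹ a u|/ā`. -/
theorem stmt3 (a : ℝ → ℝ)
    (ha : MemLp a 2 (volume.restrict (Ioc (0:ℝ) 1)))
    (abar : ℝ) (habar : abar = ∫ x in (0:ℝ)..1, a x) (hpos : 0 < abar)
    (u u' : ℝ → ℝ)
    (hu : ∀ x ∈ Icc (0:ℝ) 1, HasDerivAt u (u' x) x)
    (hu' : ContinuousOn u' (Icc (0:ℝ) 1)) :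
    L2nrm u ≤ (1 / Real.pi) * (1 + (1 / abar) * L2nrm (fun x => a x - abar)) * L2nrm u'
        + (1 / abar) * |∫ x in (0:ℝ)..1, a x * u x| := by
  have hu_cont : ContinuousOn u (Icc 0 1) := fun x hx => (hu x hx).continuousAt.continuousWithinAt
  set ubar := ∫ x in (0:ℝ)..1, u x
  set w := fun x => u x - ubar
  have hw_mean : ∫ x in (0:ℝ)..1, w x = 0 :=
    integral_sub_integral_eq_zero (hu_cont.intervalIntegrable_of_Icc zero_le_one)
  have hwirtinger : L2nrm w ≤ 1 / Real.pi * L2nrm u' :=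
    L2nrm_le_of_integral_eq_zero (fun x hx => (hu x hx).sub_const ubar) hu' hw_mean
  have hsplit : L2nrm u ≤ L2nrm w + |ubar| := by
    simpa only [w, sub_add_cancel] using L2nrm_add_const_le (w := w)
      ((hu_cont.sub continuousOn_const).intervalIntegrable_of_Icc zero_le_one)
      (((hu_cont.sub continuousOn_const).pow 2).intervalIntegrable_of_Icc zero_le_one) hw_mean ubar
  have hubar := abs_integral_mul_abs_integral_le ha hu_cont
  rw [← habar, abs_of_pos hpos, ← le_div_iff₀' hpos, ← one_div_mul_eq_div] at hubar
  have hcoef : 0 ≤ 1 + 1 / abar * L2nrm (fun x => a x - abar) := by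
    have : 0 ≤ L2nrm (fun x => a x - abar) := Real.sqrt_nonneg _
    positivity
  calc L2nrm u ≤ L2nrm w + |ubar| := hsplit
    _ ≤ L2nrm w + 1 / abar * (|∫ x in (0:ℝ)..1, a x * u x|
          + L2nrm (fun x => a x - abar) * L2nrm w) := by gcongr
    _ = (1 + 1 / abar * L2nrm (fun x => a x - abar)) * L2nrm w
          + 1 / abar * |∫ x in (0:ℝ)..1, a x * u x| := by ring
    _ ≤ (1 + 1 / abar * L2nrm (fun x => a x - abar)) * (1 / Real.pi * L2nrm u')
          + 1 / abar * |∫ x in (0:ℝ)..1, a x * u x| := by gcongr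
    _ = _ := by ring
end
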